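/- Let F : ℝ → ℕ be a nondecreasing function and let a ∈ (0, ∞) be such that limsup_{T → +∞} (log F(T))/T ≥ a. Then for every ε with 0 < ε < a and every δ > 0, the set of real numbers T such that F(T + δ/2) − F(T − δ/2) ≥ exp((a − ε)·T) is unbounded above; i.e. there exists a sequence T_n → +∞ with F(T_n + δ/2) − F(T_n − δ/2) ≥ exp((a − ε)·T_n) for all n. -/
import Mathlib
set_option maxHeartbeats 1000000


open Filter

/-- If `F : ℝ → ℕ` is nondecreasing and `limsup_{T → +∞} log (F T) / T ≥ a` for some `a > 0`,
then for every `0 < ε < a` and every `δ > 0` there is a sequence `Tₙ → +∞` such that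
`F (Tₙ + δ/2) - F (Tₙ - δ/2) ≥ exp ((a - ε) * Tₙ)` for all `n`. -/
theorem exponential_growth_in_windows
    (F : ℝ → ℕ) (hF : Monotone F) (a : ℝ) (ha : 0 < a)
    (hlim : (a : EReal) ≤
      Filter.limsup (fun T : ℝ => ((Real.log (F T) / T : ℝ) : EReal)) Filter.atTop)
    (ε : ℝ) (hε : 0 < ε) (hεa : ε < a) (δ : ℝ) (hδ : 0 < δ) :
    ∃ u : ℕ → ℝ, Filter.Tendsto u Filter.atTop Filter.atTop ∧
      ∀ n : ℕ, Real.exp ((a - ε) * u n) ≤ (F (u n + δ / 2) : ℝ) - (F (u n - δ / 2) : ℝ) := by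
  obtain ⟨b, hb_def⟩ : ∃ b : ℝ, b = a - ε := ⟨_, rfl⟩
  have hb : 0 < b := by rw [hb_def]; linarith
  have key : ∀ n : ℕ, ∃ T, (n : ℝ) ≤ T ∧
      Real.exp (b * T) ≤ (F (T + δ / 2) : ℝ) - (F (T - δ / 2) : ℝ) := by
    intro n
    by_contra hcon
    push_neg at hcon
    -- hcon : ∀ T, n ≤ T → (F (T+δ/2) : ℝ) - F (T-δ/2) < exp (b T)
    have hM : (0:ℝ) ≤ (n : ℝ) := Nat.cast_nonneg n
    obtain ⟨L, hL_def⟩ : ∃ L : ℕ → ℝ, ∀ k : ℕ, L k = (n : ℝ) + δ / 2 + k * δ :=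
      ⟨_, fun _ => rfl⟩
    have hL0 : L 0 = (n : ℝ) + δ / 2 := by rw [hL_def]; norm_num
    have hLsucc : ∀ k : ℕ, L (k + 1) = L k + δ := by
      intro k; rw [hL_def, hL_def]; push_cast; ring
    have step : ∀ k : ℕ,
        (F (L (k + 1)) : ℝ) ≤ (F (L k) : ℝ) + Real.exp (b * (L k + δ / 2)) := by
      intro k
      have hk0 : (0:ℝ) ≤ (k:ℝ) * δ := by positivity
      have hT : (n : ℝ) ≤ L k + δ / 2 := by rw [hL_def]; linarith
      have h1 := hcon (L k + δ / 2) hT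
      have e1 : L k + δ / 2 + δ / 2 = L (k + 1) := by rw [hLsucc]; ring
      have e2 : L k + δ / 2 - δ / 2 = L k := by ring
      rw [e1, e2] at h1
      linarith
    have hr : 1 < Real.exp (b * δ) := by
      rw [show (1:ℝ) = Real.exp 0 from (Real.exp_zero).symm]
      exact Real.exp_lt_exp.mpr (by positivity)
    have hr' : 0 < Real.exp (b * δ) - 1 := by linarith
    obtain ⟨D, hD_def⟩ : ∃ D : ℝ, D = (F (L 0) : ℝ) * Real.exp (-(b * L 0)) +
        Real.exp (b * δ / 2) / (Real.exp (b * δ) - 1) := ⟨_, rfl⟩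
    have hD : 0 < D := by rw [hD_def]; positivity
    have hDstep : Real.exp (b * δ / 2) ≤ D * (Real.exp (b * δ) - 1) := by
      have h1 : (0:ℝ) ≤ (F (L 0) : ℝ) * Real.exp (-(b * L 0)) := by positivity
      have h2 : Real.exp (b * δ / 2) / (Real.exp (b * δ) - 1) * (Real.exp (b * δ) - 1)
          = Real.exp (b * δ / 2) := by field_simp
      rw [hD_def]; nlinarith
    have bound : ∀ k : ℕ, (F (L k) : ℝ) ≤ D * Real.exp (b * L k) := by
      intro k
      induction k with
      | zero =>
        have h2 : 0 < Real.exp (b * δ / 2) / (Real.exp (b * δ) - 1) := by positivity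
        have h3 : (F (L 0) : ℝ) * Real.exp (-(b * L 0)) * Real.exp (b * L 0)
            = (F (L 0) : ℝ) := by
          rw [mul_assoc, ← Real.exp_add]; simp
        have h4 : 0 < Real.exp (b * L 0) := Real.exp_pos _
        rw [hD_def]; nlinarith
      | succ k ih =>
        have h1 := step k
        have e1 : b * L (k + 1) = b * L k + b * δ := by rw [hLsucc]; ring
        have e2 : b * (L k + δ / 2) = b * L k + b * δ / 2 := by ring
        rw [e1, Real.exp_add]
        rw [e2, Real.exp_add] at h1
        have h4 : 0 < Real.exp (b * L k) := Real.exp_pos _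
        have h5 := mul_le_mul_of_nonneg_left hDstep h4.le
        calc (F (L (k + 1)) : ℝ)
            ≤ D * Real.exp (b * L k) + Real.exp (b * L k) * Real.exp (b * δ / 2) := by
              linarith
          _ ≤ D * Real.exp (b * L k)
              + Real.exp (b * L k) * (D * (Real.exp (b * δ) - 1)) := by linarith
          _ = D * (Real.exp (b * L k) * Real.exp (b * δ)) := by ring
    obtain ⟨E, hE_def⟩ : ∃ E : ℝ, E = D * Real.exp (b * δ) := ⟨_, rfl⟩
    have hE : 0 < E := by rw [hE_def]; positivity
    have global : ∀ T : ℝ, L 0 ≤ T → (F T : ℝ) ≤ E * Real.exp (b * T) := by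
      intro T hT
      obtain ⟨k, hk_def⟩ : ∃ k : ℕ, k = ⌈(T - L 0) / δ⌉₊ := ⟨_, rfl⟩
      have hx : 0 ≤ (T - L 0) / δ := by
        apply div_nonneg _ hδ.le; linarith
      have hk1 : (T - L 0) / δ ≤ (k : ℝ) := by rw [hk_def]; exact Nat.le_ceil _
      have hk2 : (k : ℝ) < (T - L 0) / δ + 1 := by
        rw [hk_def]; exact Nat.ceil_lt_add_one hx
      have hLk : L k = L 0 + (k : ℝ) * δ := by rw [hL_def, hL0]
      have hTLk : T ≤ L k := by
        rw [hLk]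
        have := (div_le_iff₀ hδ).mp hk1
        linarith
      have hLkT : L k ≤ T + δ := by
        rw [hLk]
        have h2 : (k : ℝ) * δ < ((T - L 0) / δ + 1) * δ :=
          mul_lt_mul_of_pos_right hk2 hδ
        have h3 : ((T - L 0) / δ + 1) * δ = T - L 0 + δ := by field_simp
        linarith
      calc (F T : ℝ) ≤ (F (L k) : ℝ) := by exact_mod_cast hF hTLk
        _ ≤ D * Real.exp (b * L k) := bound k
        _ ≤ D * Real.exp (b * (T + δ)) := by
            apply mul_le_mul_of_nonneg_left _ hD.le
            exact Real.exp_le_exp.mpr (by nlinarith)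
        _ = E * Real.exp (b * T) := by
            rw [hE_def, mul_assoc, ← Real.exp_add]; ring_nf
    -- eventual bound on log F T / T
    obtain ⟨c, hc_def⟩ : ∃ c : ℝ, c = |Real.log E| := ⟨_, rfl⟩
    have hc : 0 ≤ c := hc_def ▸ abs_nonneg _
    obtain ⟨T1, hT1_def⟩ : ∃ T1 : ℝ, T1 = max (L 0) (max 1 (2 * c / ε)) := ⟨_, rfl⟩
    have evbound : ∀ T : ℝ, T1 ≤ T → Real.log (F T) / T ≤ b + ε / 2 := by
      intro T hT
      rw [hT1_def] at hT
      have hT1a : L 0 ≤ T := le_trans (le_max_left _ _) hT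
      have hT1b : (1:ℝ) ≤ T := le_trans (le_trans (le_max_left _ _) (le_max_right _ _)) hT
      have hT1c : 2 * c / ε ≤ T :=
        le_trans (le_trans (le_max_right _ _) (le_max_right _ _)) hT
      have hTpos : 0 < T := by linarith
      rcases Nat.eq_zero_or_pos (F T) with h0 | h0
      · rw [h0, Nat.cast_zero, Real.log_zero, zero_div]
        positivity
      · have hF1 : (1:ℝ) ≤ (F T : ℝ) := by exact_mod_cast h0
        have hlog : Real.log (F T) ≤ Real.log E + b * T := by
          have h1 : Real.log (F T) ≤ Real.log (E * Real.exp (b * T)) :=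
            Real.log_le_log (by linarith) (global T hT1a)
          rwa [Real.log_mul hE.ne' (Real.exp_pos _).ne', Real.log_exp] at h1
        have hcT : c / T ≤ ε / 2 := by
          rw [div_le_iff₀ hTpos]
          have h2 : ε / 2 * (2 * c / ε) = c := by field_simp
          have h3 : ε / 2 * (2 * c / ε) ≤ ε / 2 * T :=
            mul_le_mul_of_nonneg_left hT1c (by positivity)
          linarith
        have h3 : Real.log (F T) / T ≤ (Real.log E + b * T) / T := by
          gcongr
        have h4 : (Real.log E + b * T) / T = Real.log E / T + b := by
          field_simp
        have h5 : Real.log E / T ≤ c / T := by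
          gcongr
          exact hc_def ▸ le_abs_self _
        linarith
    -- conclude limsup ≤ b + ε/2 < a, contradiction
    have hls : Filter.limsup (fun T : ℝ => ((Real.log (F T) / T : ℝ) : EReal)) Filter.atTop
        ≤ ((b + ε / 2 : ℝ) : EReal) := by
      refine Filter.limsup_le_of_le (by isBoundedDefault) ?_
      filter_upwards [Filter.eventually_ge_atTop T1] with T hT
      exact EReal.coe_le_coe_iff.mpr (evbound T hT)
    have h6 : (a : EReal) ≤ ((b + ε / 2 : ℝ) : EReal) := le_trans hlim hls
    have h7 : a ≤ b + ε / 2 := EReal.coe_le_coe_iff.mp h6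
    rw [hb_def] at h7
    linarith
  rw [hb_def] at key
  refine ⟨fun n => (key n).choose, ?_, fun n => ((key n).choose_spec).2⟩
  apply tendsto_atTop_mono (fun n => ((key n).choose_spec).1)
  exact tendsto_natCast_atTop_atTop
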